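/- arXiv:1407.5818 — 4 statements merged into one kernel-verified Lean document; each statement's English description precedes it below -/
import Mathlib

section
/- Let G be a d-regular graph on n vertices with d ≤ n/2, and let λ be the second largest absolute value of an eigenvalue of the adjacency matrix A(G). Then the vertex connectivity satisfies κ(G) ≥ d − 36λ²/d. -/
open Finset

noncomputable section

/-- The Laplacian eigenvalues of a graph on `Fin n`, sorted in ascending order. -/
def lapEig {n : ℕ} (G : SimpleGraph (Fin n)) [DecidableRel G.Adj] : Fin n → ℝ :=
  let h : (G.lapMatrix ℝ).IsHermitian := (SimpleGraph.posSemidef_lapMatrix ℝ G).1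
  h.eigenvalues ∘ Tuple.sort h.eigenvalues

/-- The average degree of a graph on `Fin n`. -/
def avgDeg {n : ℕ} (G : SimpleGraph (Fin n)) [DecidableRel G.Adj] : ℝ :=
  (∑ v, (G.degree v : ℝ)) / n

/- The vertex connectivity: the least size of a set of vertices whose deletion leaves a
graph that is not preconnected, and `n - 1` if no such set exists (complete graphs). -/
open scoped Classical in
def vertexConnectivity {n : ℕ} (G : SimpleGraph (Fin n)) : ℕ :=
  if ∃ S : Finset (Fin n), ¬ (G.induce ((↑S : Set (Fin n))ᶜ)).Preconnected then
    sInf {k | ∃ S : Finset (Fin n), S.card = k ∧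
      ¬ (G.induce ((↑S : Set (Fin n))ᶜ)).Preconnected}
  else n - 1

/-- The adjacency eigenvalues of a graph on `Fin n`, sorted in ascending order. -/
def adjEig {n : ℕ} (G : SimpleGraph (Fin n)) [DecidableRel G.Adj] : Fin n → ℝ :=
  let h : (G.adjMatrix ℝ).IsHermitian := by
    rw [Matrix.IsHermitian, Matrix.conjTranspose_eq_transpose_of_trivial]
    exact G.isSymm_adjMatrix
  h.eigenvalues ∘ Tuple.sort h.eigenvalues

/-!
Write `e(X, Y)` for the number of ordered edges from `X` to `Y`. All adjacency eigenvalues are at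
most `d` in absolute value and the all-ones vector `𝟙` is an eigenvector for `d`, so if the top
eigenvalue exceeds `λ`, its eigenvector is a multiple of `𝟙`. Hence the adjacency operator has norm
at most `λ` on `𝟙ᗮ`, and projecting onto `𝟙` and `𝟙ᗮ` gives the expander mixing lemma
`|e(X, Y) - d |X| |Y| / n| ≤ λ √|X| √|Y|`.

Let `S` be a minimum vertex cut with `|S| < d` and `A` the smaller of the two sides it leaves, so
that all neighbours of `A` lie in `A ∪ S`; in particular `d ≤ |A| + |S|`. If `d ≤ 6λ` there is
nothing to prove. Otherwise mixing between `A` and the other side, which span no edge, forces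
`9 |A| < n`, and mixing on `(A, A)` and `(A, S)`, which together carry the `d |A|` edges leaving
`A`, then gives `|A| d ≤ 81 λ² / 4`. Hence `d (d - |S|) ≤ d |A| ≤ 36 λ²`.
-/

open scoped InnerProductSpace RealInnerProductSpace

section SpectralGap

variable {ι E : Type*} [Fintype ι] [NormedAddCommGroup E] [InnerProductSpace ℝ E]
  {T : E →ₗ[ℝ] E}

theorem LinearMap.IsSymmetric.norm_apply_le_of_inner_eq_zero (hT : T.IsSymmetric)
    (b : OrthonormalBasis ι ℝ E) {μ : ι → ℝ} (hb : ∀ i, T (b i) = μ i • b i)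
    {lam : ℝ} (hlam : 0 ≤ lam) {x : E} (hx : ∀ i, lam < |μ i| → ⟪b i, x⟫ = 0) :
    ‖T x‖ ≤ lam * ‖x‖ := by
  refine le_of_sq_le_sq ?_ (by positivity)
  calc ‖T x‖ ^ 2 = ∑ i, (μ i * ⟪b i, x⟫) ^ 2 := by
        rw [← b.sum_sq_norm_inner_right]
        simp_rw [← hT _ x, hb, real_inner_smul_left, Real.norm_eq_abs, sq_abs]
    _ ≤ ∑ i, (lam * ⟪b i, x⟫) ^ 2 := by
        refine sum_le_sum fun i _ => ?_
        rw [mul_pow, mul_pow, ← sq_abs (μ i)]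
        by_cases hi : lam < |μ i|
        · simp [hx i hi]
        · gcongr
          exact not_lt.1 hi
    _ = (lam * ‖x‖) ^ 2 := by
        simp_rw [mul_pow, ← mul_sum, ← b.sum_sq_norm_inner_right, Real.norm_eq_abs, sq_abs]

theorem LinearMap.IsSymmetric.norm_apply_le_of_inner_eigenvector_eq_zero (hT : T.IsSymmetric)
    (b : OrthonormalBasis ι ℝ E) {μ : ι → ℝ} (hb : ∀ i, T (b i) = μ i • b i)
    {d : ℝ} {v : E} (hv : T v = d • v) (hv0 : v ≠ 0) (hμd : ∀ i, |μ i| ≤ d)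
    {lam : ℝ} (hlam : 0 ≤ lam) {i₀ : ι} (hμ : ∀ i ≠ i₀, |μ i| ≤ lam)
    {x : E} (hx : ⟪v, x⟫ = 0) :
    ‖T x‖ ≤ lam * ‖x‖ := by
  refine hT.norm_apply_le_of_inner_eq_zero b hb hlam fun i hi => ?_
  obtain rfl : i = i₀ := by_contra fun h => (hμ i h).not_gt hi
  -- `v` is orthogonal to the eigenvectors whose eigenvalue is not `d`, hence a multiple of `b i`
  have hbv : ∀ j ≠ i, ⟪b j, v⟫ = 0 := fun j hj =>
    hT.orthogonalFamily_eigenspaces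
      (ne_of_lt ((le_abs_self _).trans_lt ((hμ j hj).trans_lt (hi.trans_le (hμd i)))))
      ⟨b j, Module.End.mem_eigenspace_iff.2 (hb j)⟩ ⟨v, Module.End.mem_eigenspace_iff.2 hv⟩
  have hv' : v = ⟪b i, v⟫ • b i := by
    conv_lhs => rw [← b.sum_repr' v]
    exact sum_eq_single i (fun j _ hj => by rw [hbv j hj, zero_smul]) (by simp)
  have hbi : ⟪b i, v⟫ ≠ 0 := fun h => hv0 (by rw [hv', h, zero_smul])
  rw [hv', real_inner_smul_left] at hx
  exact (mul_eq_zero.1 hx).resolve_left hbi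

theorem div_norm_sq_mul_norm_sq (v x : E) : ⟪v, x⟫ / ‖v‖ ^ 2 * ‖v‖ ^ 2 = ⟪v, x⟫ :=
  div_mul_cancel_of_imp fun h => by simp [norm_eq_zero.1 (pow_eq_zero_iff two_ne_zero |>.1 h)]

theorem inner_sub_div_smul_eq_zero (v x : E) : ⟪v, x - (⟪v, x⟫ / ‖v‖ ^ 2) • v⟫ = 0 := by
  rw [inner_sub_right, real_inner_smul_right, real_inner_self_eq_norm_sq,
    div_norm_sq_mul_norm_sq, sub_self]

theorem norm_sub_div_smul_le (v x : E) : ‖x - (⟪v, x⟫ / ‖v‖ ^ 2) • v‖ ≤ ‖x‖ := by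
  set x' := x - (⟪v, x⟫ / ‖v‖ ^ 2) • v
  have hx : x = x' + (⟪v, x⟫ / ‖v‖ ^ 2) • v := by simp [x']
  have hx' : ⟪v, x'⟫ = 0 := inner_sub_div_smul_eq_zero v x
  refine le_of_sq_le_sq ?_ (norm_nonneg x)
  conv_rhs => rw [hx]
  rw [norm_add_sq_real, real_inner_smul_right, real_inner_comm v x', hx']
  nlinarith [sq_nonneg ‖(⟪v, x⟫ / ‖v‖ ^ 2) • v‖]

/-- Expander mixing lemma: split `x` and `y` along `v` and `vᗮ`. -/
theorem LinearMap.IsSymmetric.abs_inner_sub_le (hT : T.IsSymmetric) {d : ℝ} {v : E}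
    (hv : T v = d • v) {lam : ℝ} (hlam : 0 ≤ lam)
    (hgap : ∀ x, ⟪v, x⟫ = 0 → ‖T x‖ ≤ lam * ‖x‖) (x y : E) :
    |⟪x, T y⟫ - d * ⟪v, x⟫ * ⟪v, y⟫ / ‖v‖ ^ 2| ≤ lam * ‖x‖ * ‖y‖ := by
  set c := ⟪v, x⟫ / ‖v‖ ^ 2
  set c' := ⟪v, y⟫ / ‖v‖ ^ 2
  set x' := x - c • v
  set y' := y - c' • v
  have hx' : ⟪v, x'⟫ = 0 := inner_sub_div_smul_eq_zero v x
  have hy' : ⟪v, y'⟫ = 0 := inner_sub_div_smul_eq_zero v y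
  have hTy' : ⟪v, T y'⟫ = 0 := by rw [← hT, hv, real_inner_smul_left, hy', mul_zero]
  have hx : x = x' + c • v := by simp [x']
  have hTy : T y = T y' + (c' * d) • v := by simp [y', hv, mul_smul]
  have key : ⟪x, T y⟫ - d * ⟪v, x⟫ * ⟪v, y⟫ / ‖v‖ ^ 2 = ⟪x', T y'⟫ := by
    have hc : c * ‖v‖ ^ 2 = ⟪v, x⟫ := div_norm_sq_mul_norm_sq v x
    rw [mul_div_assoc, ← hc, hTy]
    conv_lhs => rw [hx]
    simp only [inner_add_left, inner_add_right, real_inner_smul_left, real_inner_smul_right,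
      real_inner_comm v x', hx', hTy', real_inner_self_eq_norm_sq]
    ring
  rw [key]
  calc |⟪x', T y'⟫| ≤ ‖x'‖ * ‖T y'‖ := abs_real_inner_le_norm _ _
    _ ≤ ‖x‖ * (lam * ‖y‖) := by
        gcongr
        · exact norm_sub_div_smul_le v x
        · exact (hgap y' hy').trans (mul_le_mul_of_nonneg_left (norm_sub_div_smul_le v y) hlam)
    _ = lam * ‖x‖ * ‖y‖ := by ring

end SpectralGap

theorem Matrix.IsHermitian.toEuclideanLin_eigenvectorBasis {n : Type*} [Fintype n]
    [DecidableEq n] {A : Matrix n n ℝ} (hA : A.IsHermitian) (i : n) :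
    Matrix.toEuclideanLin A (hA.eigenvectorBasis i) = hA.eigenvalues i • hA.eigenvectorBasis i :=
  WithLp.ofLp_injective 2 (hA.mulVec_eigenvectorBasis i)

section IndicatorVec

variable {V : Type*} [DecidableEq V]

def indicatorVec (s : Finset V) : EuclideanSpace ℝ V :=
  WithLp.toLp 2 fun v => if v ∈ s then 1 else 0

@[simp]
theorem indicatorVec_apply (s : Finset V) (v : V) :
    indicatorVec s v = if v ∈ s then 1 else 0 := rfl

variable [Fintype V]

theorem inner_indicatorVec_left (s : Finset V) (x : EuclideanSpace ℝ V) :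
    ⟪indicatorVec s, x⟫ = ∑ v ∈ s, x v := by
  simp [PiLp.inner_apply, sum_ite_mem]

theorem norm_indicatorVec (s : Finset V) : ‖indicatorVec s‖ = √(#s : ℝ) := by
  rw [norm_eq_sqrt_real_inner, inner_indicatorVec_left]
  simp +contextual

theorem inner_indicatorVec_univ_indicatorVec (s : Finset V) :
    ⟪indicatorVec univ, indicatorVec s⟫ = #s := by
  simp [inner_indicatorVec_left]

end IndicatorVec

section AdjMatrix

variable {V : Type*} [Fintype V] [DecidableEq V] (G : SimpleGraph V) [DecidableRel G.Adj] {d : ℕ}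

theorem inner_indicatorVec_toEuclideanLin_adjMatrix (s t : Finset V) :
    ⟪indicatorVec s, Matrix.toEuclideanLin (G.adjMatrix ℝ) (indicatorVec t)⟫ =
      #(G.interedges s t) := by
  rw [SimpleGraph.interedges_def, card_filter, inner_indicatorVec_left, sum_product]
  simp [Matrix.mulVec, dotProduct, SimpleGraph.adjMatrix_apply]

theorem toEuclideanLin_adjMatrix_indicatorVec_univ (hreg : G.IsRegularOfDegree d) :
    Matrix.toEuclideanLin (G.adjMatrix ℝ) (indicatorVec univ) = (d : ℝ) • indicatorVec univ := by
  ext v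
  simp [Matrix.mulVec, dotProduct, SimpleGraph.adjMatrix_apply, ← G.neighborFinset_eq_filter,
    hreg v]

/-- By Gershgorin's circle theorem, as every row of the adjacency matrix has absolute sum `d`. -/
theorem SimpleGraph.IsRegularOfDegree.abs_eigenvalues_adjMatrix_le
    (hreg : G.IsRegularOfDegree d) (i : V) :
    |(G.isHermitian_adjMatrix ℝ).eigenvalues i| ≤ d := by
  have hμ : Module.End.HasEigenvalue (Matrix.toLin' (G.adjMatrix ℝ))
      ((G.isHermitian_adjMatrix ℝ).eigenvalues i) := by
    rw [Module.End.hasEigenvalue_iff_mem_spectrum, Matrix.spectrum_toLin']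
    exact (G.isHermitian_adjMatrix ℝ).eigenvalues_mem_spectrum_real i
  obtain ⟨k, hk⟩ := eigenvalue_mem_ball hμ
  rw [Metric.mem_closedBall, Real.dist_eq, sum_erase _ (by simp)] at hk
  simpa [SimpleGraph.adjMatrix_apply, apply_ite, sum_boole, ← G.neighborFinset_eq_filter, hreg k]
    using hk

theorem SimpleGraph.IsRegularOfDegree.abs_card_interedges_sub_le
    (hreg : G.IsRegularOfDegree d) {lam : ℝ} (hlam : 0 ≤ lam)
    (hgap : ∀ x, ⟪indicatorVec univ, x⟫ = 0 →
      ‖Matrix.toEuclideanLin (G.adjMatrix ℝ) x‖ ≤ lam * ‖x‖) (s t : Finset V) :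
    |(#(G.interedges s t) : ℝ) - d * #s * #t / Fintype.card V| ≤ lam * √(#s : ℝ) * √(#t : ℝ) := by
  have := (Matrix.isSymmetric_toEuclideanLin_iff.2 (G.isHermitian_adjMatrix ℝ)).abs_inner_sub_le
    (toEuclideanLin_adjMatrix_indicatorVec_univ G hreg) hlam hgap (indicatorVec s) (indicatorVec t)
  rwa [inner_indicatorVec_toEuclideanLin_adjMatrix, inner_indicatorVec_univ_indicatorVec,
    inner_indicatorVec_univ_indicatorVec, norm_indicatorVec, norm_indicatorVec, norm_indicatorVec,
    Real.sq_sqrt (Nat.cast_nonneg _), card_univ] at this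

theorem SimpleGraph.IsRegularOfDegree.card_interedges_univ (hreg : G.IsRegularOfDegree d)
    (s : Finset V) : (#(G.interedges s univ) : ℝ) = d * #s := by
  rw [← inner_indicatorVec_toEuclideanLin_adjMatrix,
    toEuclideanLin_adjMatrix_indicatorVec_univ G hreg, real_inner_smul_right, real_inner_comm,
    inner_indicatorVec_univ_indicatorVec]

end AdjMatrix

theorem SimpleGraph.IsRegularOfDegree.norm_toEuclideanLin_adjMatrix_le_of_abs_adjEig_le {n d : ℕ}
    {G : SimpleGraph (Fin n)} [DecidableRel G.Adj] (hreg : G.IsRegularOfDegree d) (hn : 0 < n)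
    {lam : ℝ} (hlam : 0 ≤ lam) (hub : ∀ i : Fin n, (i : ℕ) < n - 1 → |adjEig G i| ≤ lam)
    {x : EuclideanSpace ℝ (Fin n)} (hx : ⟪indicatorVec univ, x⟫ = 0) :
    ‖Matrix.toEuclideanLin (G.adjMatrix ℝ) x‖ ≤ lam * ‖x‖ := by
  have hA := G.isHermitian_adjMatrix ℝ
  set σ := Tuple.sort hA.eigenvalues
  refine (Matrix.isSymmetric_toEuclideanLin_iff.2 hA).norm_apply_le_of_inner_eigenvector_eq_zero
    hA.eigenvectorBasis hA.toEuclideanLin_eigenvectorBasis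
    (toEuclideanLin_adjMatrix_indicatorVec_univ G hreg) ?_ (hreg.abs_eigenvalues_adjMatrix_le G)
    hlam (i₀ := σ ⟨n - 1, by omega⟩) (fun i hi => ?_) hx
  · intro h
    simpa using congrArg (fun y : EuclideanSpace ℝ (Fin n) => y ⟨0, hn⟩) h
  · have h : |hA.eigenvalues (σ (σ.symm i))| ≤ lam := hub _ ?_
    · rwa [Equiv.apply_symm_apply] at h
    · have h1 : (σ.symm i : ℕ) ≠ n - 1 := fun h =>
        hi (by rw [← Equiv.apply_symm_apply σ i]; exact congrArg σ (Fin.ext h))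
      have := (σ.symm i).isLt
      omega

theorem nine_mul_lt_of_mixing {a b k n d lam : ℝ} (hlam : 0 ≤ lam) (hl : 6 * lam < d)
    (ha : 0 < a) (hn : a + b + k = n) (hab : a ≤ b) (hkd : k < d) (hd : d ≤ n / 2)
    (hAB : d * a * b / n ≤ lam * √a * √b) :
    9 * a < n := by
  have hd0 : 0 < d := by linarith
  have hn0 : 0 < n := by linarith
  have hb0 : 0 < b := by linarith
  have h1 : d * √a * √b * (√a * √b) ≤ lam * n * (√a * √b) := by
    calc d * √a * √b * (√a * √b) = d * (√a * √a) * (√b * √b) := by ring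
      _ = d * a * b := by rw [Real.mul_self_sqrt ha.le, Real.mul_self_sqrt hb0.le]
      _ ≤ lam * √a * √b * n := (div_le_iff₀ hn0).1 hAB
      _ = lam * n * (√a * √b) := by ring
  have h2 := pow_le_pow_left₀ (by positivity)
    (le_of_mul_le_mul_right h1 (mul_pos (Real.sqrt_pos.2 ha) (Real.sqrt_pos.2 hb0))) 2
  rw [mul_pow, mul_pow, Real.sq_sqrt ha.le, Real.sq_sqrt hb0.le, mul_pow] at h2
  -- `b > n / 4` and `36 * lam ^ 2 < d ^ 2`
  have h3 : d ^ 2 * a * n < 4 * (d ^ 2 * a * b) := by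
    nlinarith [mul_pos (pow_pos hd0 2) ha]
  have h4 : 36 * (lam ^ 2 * n ^ 2) < d ^ 2 * n ^ 2 := by
    have : 36 * lam ^ 2 < d ^ 2 := by nlinarith
    nlinarith [mul_lt_mul_of_pos_right this (pow_pos hn0 2)]
  have h5 : d ^ 2 * n * (9 * a) < d ^ 2 * n * n := by nlinarith
  exact lt_of_mul_lt_mul_left h5 (by positivity)

theorem sub_le_of_mixing_estimates {a b k n d lam : ℝ} (hlam : 0 ≤ lam) (ha : 0 < a) (hk : 0 ≤ k)
    (hn : a + b + k = n) (hab : a ≤ b) (hd₀ : 0 ≤ d) (hd : d ≤ n / 2) (hdk : d ≤ a + k)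
    (hAB : d * a * b / n ≤ lam * √a * √b)
    (hA : d * a ≤ d * a * a / n + d * a * k / n + lam * a + lam * √a * √k) :
    d - 36 * lam ^ 2 / d ≤ k := by
  rcases le_or_gt d k with hkd | hkd
  · have : 0 ≤ 36 * lam ^ 2 / d := by positivity
    linarith
  have hd0 : 0 < d := hk.trans_lt hkd
  rcases le_or_gt d (6 * lam) with hl | hl
  · have : d ≤ 36 * lam ^ 2 / d := by rw [le_div_iff₀ hd0]; nlinarith
    linarith
  have ha9 := nine_mul_lt_of_mixing hlam hl ha hn hab hkd hd hAB
  have hn0 : 0 < n := by linarith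
  have hsa := Real.mul_self_sqrt ha.le
  have h1 : 2 / 9 * d * a < lam * √a * √k := by
    have e1 : d * a * a / n < d * a / 9 := by
      rw [div_lt_iff₀ hn0]; nlinarith [mul_pos (mul_pos hd0 ha) (sub_pos.2 ha9)]
    have e2 : d * a * k / n < d * a / 2 := by
      rw [div_lt_iff₀ hn0]
      nlinarith [mul_pos (mul_pos hd0 ha) (sub_pos.2 (show k < n / 2 by linarith))]
    nlinarith [mul_lt_mul_of_pos_right hl ha]
  have h2 : 2 / 9 * d * √a < lam * √k := by
    refine lt_of_mul_lt_mul_right ?_ (Real.sqrt_nonneg a)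
    calc 2 / 9 * d * √a * √a = 2 / 9 * d * a := by rw [mul_assoc _ √a, hsa]
      _ < lam * √a * √k := h1
      _ = lam * √k * √a := by ring
  have h3 : 4 / 81 * d ^ 2 * a < lam ^ 2 * k := by
    have := pow_lt_pow_left₀ h2 (by positivity) two_ne_zero
    rw [mul_pow, mul_pow, Real.sq_sqrt ha.le, mul_pow, Real.sq_sqrt hk] at this
    linarith
  have h4 : 4 / 81 * d * a ≤ lam ^ 2 := by
    refine le_of_mul_le_mul_right ?_ hd0
    nlinarith [mul_le_mul_of_nonneg_left hkd.le (sq_nonneg lam)]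
  rw [sub_le_iff_le_add, ← sub_le_iff_le_add', le_div_iff₀ hd0]
  nlinarith [mul_le_mul_of_nonneg_right (show d - k ≤ a by linarith) hd0.le]

def SimpleGraph.IsSeparatedBy {V : Type*} [DecidableEq V] (G : SimpleGraph V) (A S : Finset V) :
    Prop :=
  ∀ x ∈ A, ∀ y, G.Adj x y → y ∈ A ∪ S

section Separation

variable {V : Type*} [Fintype V] [DecidableEq V] (G : SimpleGraph V)

theorem SimpleGraph.IsSeparatedBy.compl {A S : Finset V} (hsep : G.IsSeparatedBy A S) :
    G.IsSeparatedBy (A ∪ S)ᶜ S := by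
  intro x hx y hxy
  by_cases hy : y ∈ A
  · exact absurd (hsep y hy x hxy.symm) (mem_compl.1 hx)
  · by_cases hyS : y ∈ S
    · exact mem_union_right _ hyS
    · exact mem_union_left _ (by simp [hy, hyS])

theorem SimpleGraph.exists_isSeparatedBy_of_not_preconnected {S : Finset V}
    (h : ¬(G.induce (↑S : Set V)ᶜ).Preconnected) :
    ∃ A : Finset V, A.Nonempty ∧ Disjoint A S ∧ 2 * #A + #S ≤ Fintype.card V ∧
      G.IsSeparatedBy A S := by
  classical
  simp only [SimpleGraph.Preconnected, not_forall] at h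
  obtain ⟨u, w, huw⟩ := h
  let P : Finset V := {v | ∃ hv : v ∉ S, (G.induce (↑S : Set V)ᶜ).Reachable u ⟨v, hv⟩}
  have hmem : ∀ v, v ∈ P ↔ ∃ hv : v ∉ S, (G.induce (↑S : Set V)ᶜ).Reachable u ⟨v, hv⟩ := by
    simp [P]
  have hP : G.IsSeparatedBy P S := by
    intro x hx y hxy
    obtain ⟨hxS, hux⟩ := (hmem x).1 hx
    by_cases hyS : y ∈ S
    · exact mem_union_right _ hyS
    · exact mem_union_left _ ((hmem y).2 ⟨hyS, hux.trans (SimpleGraph.Adj.reachable hxy)⟩)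
  have hPS : Disjoint P S := Finset.disjoint_left.2 fun {_} hv => ((hmem _).1 hv).1
  have hcard := card_compl_add_card (P ∪ S)
  rw [card_union_of_disjoint hPS] at hcard
  rcases le_total #P #(P ∪ S)ᶜ with hle | hle
  · exact ⟨P, ⟨u, (hmem u).2 ⟨u.2, .rfl⟩⟩, hPS, by omega, hP⟩
  · refine ⟨(P ∪ S)ᶜ, ⟨w, ?_⟩, disjoint_compl_left.mono_right subset_union_right, by omega,
      hP.compl⟩
    simp only [mem_compl, mem_union, hmem, not_or]
    exact ⟨fun ⟨_, huw'⟩ => huw huw', w.2⟩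

variable [DecidableRel G.Adj]

theorem SimpleGraph.IsSeparatedBy.interedges_compl_eq_empty {A S : Finset V}
    (hsep : G.IsSeparatedBy A S) : G.interedges A (A ∪ S)ᶜ = ∅ := by
  ext ⟨x, y⟩
  simp only [SimpleGraph.mk_mem_interedges_iff, mem_compl, Finset.notMem_empty, iff_false]
  exact fun ⟨hx, hy, hxy⟩ => hy (hsep x hx y hxy)

theorem SimpleGraph.IsRegularOfDegree.card_interedges_add_card_interedges {d : ℕ}
    (hreg : G.IsRegularOfDegree d) {A S : Finset V} (hAS : Disjoint A S)
    (hsep : G.IsSeparatedBy A S) :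
    (#(G.interedges A A) : ℝ) + #(G.interedges A S) = d * #A := by
  have h : G.interedges A univ = G.interedges A A ∪ G.interedges A S := by
    ext ⟨x, y⟩
    simp only [mem_union, SimpleGraph.mk_mem_interedges_iff, mem_univ, true_and]
    constructor
    · rintro ⟨hx, hxy⟩
      rcases mem_union.1 (hsep x hx y hxy) with hy | hy
      exacts [Or.inl ⟨hx, hy, hxy⟩, Or.inr ⟨hx, hy, hxy⟩]
    · rintro (⟨hx, -, hxy⟩ | ⟨hx, -, hxy⟩) <;> exact ⟨hx, hxy⟩
  rw [← hreg.card_interedges_univ, h, card_union_of_disjoint (G.interedges_disjoint_right A hAS)]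
  push_cast
  ring

theorem SimpleGraph.IsRegularOfDegree.sub_le_card_of_isSeparatedBy {d : ℕ}
    (hreg : G.IsRegularOfDegree d) {lam : ℝ} (hlam : 0 ≤ lam)
    (hmix : ∀ s t : Finset V, |(#(G.interedges s t) : ℝ) - d * #s * #t / Fintype.card V| ≤
      lam * √(#s : ℝ) * √(#t : ℝ))
    {A S : Finset V} (hA : A.Nonempty) (hAS : Disjoint A S) (hsep : G.IsSeparatedBy A S)
    (hsize : 2 * #A + #S ≤ Fintype.card V) (hd : (d : ℝ) ≤ Fintype.card V / 2) :
    (d : ℝ) - 36 * lam ^ 2 / d ≤ #S := by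
  have hcard := card_compl_add_card (A ∪ S)
  rw [card_union_of_disjoint hAS] at hcard
  have hmixAB := hmix A (A ∪ S)ᶜ
  rw [hsep.interedges_compl_eq_empty, card_empty, Nat.cast_zero, zero_sub, abs_neg] at hmixAB
  have hmixAA := (abs_sub_le_iff.1 (hmix A A)).1
  have hmixAS := (abs_sub_le_iff.1 (hmix A S)).1
  have hsum := hreg.card_interedges_add_card_interedges G hAS hsep
  have hAA₀ : (#(G.interedges A A) : ℝ) ≤ #A * #A := by exact_mod_cast G.card_interedges_le_mul A A
  have hAS₀ : (#(G.interedges A S) : ℝ) ≤ #A * #S := by exact_mod_cast G.card_interedges_le_mul A S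
  have ha : (0 : ℝ) < #A := Nat.cast_pos.2 hA.card_pos
  refine sub_le_of_mixing_estimates hlam ha (Nat.cast_nonneg _)
    (by exact_mod_cast (by omega : #A + #(A ∪ S)ᶜ + #S = Fintype.card V))
    (by exact_mod_cast (by omega : #A ≤ #(A ∪ S)ᶜ)) (Nat.cast_nonneg _) hd ?_
    ((le_abs_self _).trans hmixAB) ?_
  · nlinarith
  · rw [mul_assoc lam, Real.mul_self_sqrt ha.le] at hmixAA
    linarith

end Separation

theorem vertexConnectivity_eq_or_exists {n : ℕ} (G : SimpleGraph (Fin n)) :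
    vertexConnectivity G = n - 1 ∨ ∃ S : Finset (Fin n), #S = vertexConnectivity G ∧
      ¬(G.induce (↑S : Set (Fin n))ᶜ).Preconnected := by
  unfold vertexConnectivity
  split_ifs with h
  · obtain ⟨S, hS⟩ := h
    exact Or.inr (Nat.sInf_mem (s := {k | ∃ S : Finset (Fin n), #S = k ∧
      ¬(G.induce (↑S : Set (Fin n))ᶜ).Preconnected}) ⟨_, S, rfl, hS⟩)
  · exact Or.inl rfl

theorem regular_vertex_connectivity_lower_bound {n d : ℕ} (hn : 1 < n)
    (G : SimpleGraph (Fin n)) [DecidableRel G.Adj]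
    (hreg : G.IsRegularOfDegree d) (hd : (d : ℝ) ≤ n / 2) (lam : ℝ)
    (hlam : lam = sSup {x : ℝ | ∃ i : Fin n, (i : ℕ) < n - 1 ∧ x = |adjEig G i|}) :
    (d : ℝ) - 36 * lam ^ 2 / d ≤ vertexConnectivity G := by
  have hub : ∀ i : Fin n, (i : ℕ) < n - 1 → |adjEig G i| ≤ lam := fun i hi =>
    hlam ▸ le_csSup ((Set.finite_range fun i => |adjEig G i|).subset
      (by rintro _ ⟨j, -, rfl⟩; exact ⟨j, rfl⟩)).bddAbove ⟨i, hi, rfl⟩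
  have hlam0 : 0 ≤ lam := (abs_nonneg _).trans (hub ⟨0, by omega⟩ (show 0 < n - 1 by omega))
  have hmix := hreg.abs_card_interedges_sub_le G hlam0 fun _ hx =>
    hreg.norm_toEuclideanLin_adjMatrix_le_of_abs_adjEig_le (by omega) hlam0 hub hx
  rcases vertexConnectivity_eq_or_exists G with h | ⟨S, hS, hcut⟩
  · have : 0 ≤ 36 * lam ^ 2 / d := by positivity
    rw [h, Nat.cast_sub hn.le, Nat.cast_one]
    have h2 : (2 : ℝ) ≤ n := by exact_mod_cast hn
    linarith
  · obtain ⟨A, hA, hAS, hsize, hsep⟩ := G.exists_isSeparatedBy_of_not_preconnected hcut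
    rw [← hS]
    exact hreg.sub_le_card_of_isSeparatedBy G hlam0 hmix hA hAS hsep (by simpa using hsize)
      (by simpa using hd)
end
end

section
/- Let G be a graph on n vertices with average degree d and minimum degree δ. If the Laplacian eigenvalues satisfy 2 ≤ σ_1 and σ_{n−1} ≤ 2d − 2, then the edge connectivity of G equals δ, i.e., κ′(G) = δ. -/
/-!
By the Rayleigh principle applied to `1_S - |S|/n`, which is orthogonal to the constant kernel
vector of the Laplacian, every vertex set `S` with complement `T` satisfies Fiedler's bound
`σ₁ |S| |T| ≤ n e(S, T)`. If `e(S, T) < δ`, a degree count inside `S` forces `|S| > δ`, and likewise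
`|T| > δ`; then `2 |S| |T| ≥ (e(S, T) + 2) n > n e(S, T)`, contradicting `σ₁ ≥ 2`. So every
disconnecting edge set has at least `δ` edges, and the edges at a vertex of minimum degree show
that `δ` are enough.
-/

open Finset

noncomputable section

/- The edge connectivity: the least number of edges whose deletion leaves a graph
that is not preconnected. -/
open scoped Classical in
def edgeConnectivity {n : ℕ} (G : SimpleGraph (Fin n)) : ℕ :=
  sInf {k | ∃ F : Finset (Sym2 (Fin n)), F.card = k ∧ (↑F : Set (Sym2 (Fin n))) ⊆ G.edgeSet ∧
    ¬ (G.deleteEdges (↑F : Set (Sym2 (Fin n)))).Preconnected}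

open Matrix

namespace Matrix.IsHermitian

variable {m : Type*} [Fintype m] [DecidableEq m] {A : Matrix m m ℝ} (hA : A.IsHermitian)

def eigenCoords (x : m → ℝ) : m → ℝ :=
  star (hA.eigenvectorUnitary : Matrix m m ℝ) *ᵥ x

lemma eigenCoords_mulVec (x : m → ℝ) (j : m) :
    hA.eigenCoords (A *ᵥ x) j = hA.eigenvalues j * hA.eigenCoords x j := by
  set U : Matrix m m ℝ := ↑hA.eigenvectorUnitary
  have hdiag : star U * A = diagonal hA.eigenvalues * star U := by
    have h := hA.conjStarAlgAut_star_eigenvectorUnitary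
    rw [Unitary.conjStarAlgAut_star_apply] at h
    rw [show diagonal hA.eigenvalues = diagonal (RCLike.ofReal ∘ hA.eigenvalues) from rfl,
      ← h, Matrix.mul_assoc, Unitary.mul_star_self_of_mem hA.eigenvectorUnitary.2,
      Matrix.mul_one]
  rw [eigenCoords, eigenCoords, mulVec_mulVec, hdiag, ← mulVec_mulVec, mulVec_diagonal]

lemma eigenCoords_dotProduct_eigenCoords (x y : m → ℝ) :
    hA.eigenCoords x ⬝ᵥ hA.eigenCoords y = x ⬝ᵥ y := by
  have hx : hA.eigenCoords x = x ᵥ* hA.eigenvectorUnitary := by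
    rw [eigenCoords, star_eq_conjTranspose, conjTranspose_eq_transpose_of_trivial,
      mulVec_transpose]
  rw [hx, eigenCoords, ← dotProduct_mulVec, mulVec_mulVec,
    Unitary.mul_star_self_of_mem hA.eigenvectorUnitary.2, one_mulVec]

lemma dotProduct_mulVec_eq_sum_eigenvalues_mul_sq (x : m → ℝ) :
    x ⬝ᵥ (A *ᵥ x) = ∑ j, hA.eigenvalues j * hA.eigenCoords x j ^ 2 := by
  rw [← hA.eigenCoords_dotProduct_eigenCoords, dotProduct]
  exact Finset.sum_congr rfl fun j _ => by rw [eigenCoords_mulVec]; ring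

lemma mul_dotProduct_self_le_dotProduct_mulVec {c : ℝ} {i₀ : m} (hc : 0 < c)
    (hμ : ∀ j ≠ i₀, c ≤ hA.eigenvalues j) {v x : m → ℝ} (hv : A *ᵥ v = 0) (hv₀ : v ≠ 0)
    (hxv : x ⬝ᵥ v = 0) : c * (x ⬝ᵥ x) ≤ x ⬝ᵥ (A *ᵥ x) := by
  -- in the eigenbasis the kernel vector `v` is supported on `i₀`, so `x ⊥ v` kills `x`'s
  -- `i₀`-coordinate
  have hv_coord : ∀ j ≠ i₀, hA.eigenCoords v j = 0 := fun j hj => by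
    have h := hA.eigenCoords_mulVec v j
    rw [hv, eigenCoords, mulVec_zero] at h
    exact (mul_eq_zero.mp h.symm).resolve_left (hc.trans_le (hμ j hj)).ne'
  have hdot (y : m → ℝ) : y ⬝ᵥ v = hA.eigenCoords y i₀ * hA.eigenCoords v i₀ := by
    rw [← hA.eigenCoords_dotProduct_eigenCoords, dotProduct,
      Finset.sum_eq_single i₀ (fun j _ hj => by rw [hv_coord j hj, mul_zero]) (by simp)]
  have hv_coord₀ : hA.eigenCoords v i₀ ≠ 0 := fun h =>
    hv₀ <| dotProduct_self_eq_zero.mp <| by rw [hdot, h, mul_zero]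
  have hx_coord₀ : hA.eigenCoords x i₀ = 0 :=
    (mul_eq_zero.mp ((hdot x).symm.trans hxv)).resolve_right hv_coord₀
  rw [hA.dotProduct_mulVec_eq_sum_eigenvalues_mul_sq,
    ← hA.eigenCoords_dotProduct_eigenCoords, dotProduct, Finset.mul_sum]
  refine Finset.sum_le_sum fun j _ => ?_
  rcases eq_or_ne j i₀ with rfl | hj
  · simp [hx_coord₀]
  · rw [← sq]
    exact mul_le_mul_of_nonneg_right (hμ j hj) (sq_nonneg _)

end Matrix.IsHermitian

theorem Tuple.apply_sort_one_le {n : ℕ} {α : Type*} [LinearOrder α] (f : Fin n → α) (hn : 1 < n)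
    {j : Fin n} (hj : j ≠ Tuple.sort f ⟨0, by omega⟩) : f (Tuple.sort f ⟨1, hn⟩) ≤ f j := by
  obtain ⟨i, rfl⟩ := (Tuple.sort f).surjective j
  have hi : i ≠ ⟨0, by omega⟩ := fun h => hj (congrArg _ h)
  exact Tuple.monotone_sort f
    (Fin.mk_le_of_le_val (Nat.one_le_iff_ne_zero.mpr (Fin.val_ne_of_ne hi)))

theorem lapEig_one_mul_dotProduct_self_le {n : ℕ} (hn : 1 < n) (G : SimpleGraph (Fin n))
    [DecidableRel G.Adj] {x : Fin n → ℝ} (hx : ∑ i, x i = 0) :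
    lapEig G ⟨1, hn⟩ * (x ⬝ᵥ x) ≤ x ⬝ᵥ (G.lapMatrix ℝ *ᵥ x) := by
  have hL := SimpleGraph.posSemidef_lapMatrix ℝ G
  rcases le_or_gt (lapEig G ⟨1, hn⟩) 0 with hσ | hσ
  · exact (mul_nonpos_of_nonpos_of_nonneg hσ (dotProduct_self_star_nonneg x)).trans
      (by simpa using hL.dotProduct_mulVec_nonneg x)
  · refine hL.1.mul_dotProduct_self_le_dotProduct_mulVec hσ
      (fun j hj => Tuple.apply_sort_one_le hL.1.eigenvalues hn hj)
      G.lapMatrix_mulVec_const_eq_zero (fun h => one_ne_zero (congrFun h ⟨0, by omega⟩)) ?_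
    simpa [dotProduct] using hx

namespace SimpleGraph

variable {V : Type*} [Fintype V] [DecidableEq V] (G : SimpleGraph V) [DecidableRel G.Adj]

theorem card_interedges_eq_sum_card_inter (S T : Finset V) :
    #(G.interedges S T) = ∑ v ∈ S, #(G.neighborFinset v ∩ T) := by
  rw [interedges, Rel.interedges_eq_biUnion, card_biUnion]
  · refine sum_congr rfl fun v _ => ?_
    rw [card_map]
    congr 1
    ext w
    simp [and_comm]
  · intro v _ w _ hvw
    rw [Function.onFun, Finset.disjoint_left]
    intro p hp hq
    obtain ⟨a, -, rfl⟩ := mem_map.mp hp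
    obtain ⟨b, -, hb⟩ := mem_map.mp hq
    exact hvw (congrArg Prod.fst hb).symm

theorem card_interedges_compl_comm (S : Finset V) :
    #(G.interedges Sᶜ Sᶜᶜ) = #(G.interedges S Sᶜ) := by
  have := G.symm
  rw [compl_compl]
  exact Rel.card_interedges_comm _ _

theorem dotProduct_lapMatrix_mulVec_sub_const (x : V → ℝ) (c : ℝ) :
    (x - fun _ => c) ⬝ᵥ (G.lapMatrix ℝ *ᵥ (x - fun _ => c)) = x ⬝ᵥ (G.lapMatrix ℝ *ᵥ x) := by
  simp only [← toLinearMap₂'_apply', lapMatrix_toLinearMap₂', Pi.sub_apply,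
    sub_sub_sub_cancel_right]

theorem dotProduct_lapMatrix_mulVec_indicator (S : Finset V) :
    (fun i => if i ∈ S then (1 : ℝ) else 0) ⬝ᵥ
      (G.lapMatrix ℝ *ᵥ fun i => if i ∈ S then (1 : ℝ) else 0) = #(G.interedges S Sᶜ) := by
  rw [card_interedges_eq_sum_card_inter, dotProduct]
  simp only [lapMatrix_mulVec_apply, ite_mul, one_mul, zero_mul, sum_ite_mem, univ_inter]
  push_cast
  refine sum_congr rfl fun v hv => ?_
  rw [if_pos hv, mul_one, sum_const, nsmul_one, ← card_neighborFinset_eq_degree,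
    ← card_inter_add_card_sdiff (G.neighborFinset v) S, sdiff_eq_inter_compl]
  push_cast
  ring

theorem card_interedges_le_card_of_forall_mem (S : Finset V) {F : Finset (Sym2 V)}
    (hF : ∀ v w, G.Adj v w → v ∈ S → w ∉ S → s(v, w) ∈ F) :
    #(G.interedges S Sᶜ) ≤ #F := by
  refine card_le_card_of_injOn (fun e => s(e.1, e.2)) (fun e he => ?_)
    fun e he e' he' hee' => ?_
  · obtain ⟨hS, hSc, hadj⟩ := (G.mem_interedges_iff).mp he
    exact hF _ _ hadj hS (mem_compl.mp hSc)
  · obtain ⟨hS, hSc, -⟩ := (G.mem_interedges_iff).mp he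
    obtain ⟨hS', hSc', -⟩ := (G.mem_interedges_iff).mp he'
    rcases Sym2.eq_iff.mp hee' with ⟨h₁, h₂⟩ | ⟨h₁, -⟩
    · exact Prod.ext h₁ h₂
    · exact absurd (h₁ ▸ hS) (mem_compl.mp hSc')

theorem degree_le_card_sub_one_add (S : Finset V) {v : V} (hv : v ∈ S) :
    G.degree v ≤ #S - 1 + #(G.neighborFinset v ∩ Sᶜ) := by
  have hin : #(G.neighborFinset v ∩ S) ≤ #S - 1 := by
    rw [← card_erase_of_mem hv]
    exact card_le_card fun w hw => mem_erase.mpr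
      ⟨(G.mem_neighborFinset v w).mp (mem_inter.mp hw).1 |>.ne', (mem_inter.mp hw).2⟩
  rw [← card_neighborFinset_eq_degree, ← card_inter_add_card_sdiff (G.neighborFinset v) S,
    sdiff_eq_inter_compl]
  omega

theorem minDegree_lt_card_of_card_interedges_lt (S : Finset V) (hS : S.Nonempty)
    (h : #(G.interedges S Sᶜ) < G.minDegree) : G.minDegree < #S := by
  have hsum : #S * G.minDegree ≤ #S * (#S - 1) + #(G.interedges S Sᶜ) := by
    rw [card_interedges_eq_sum_card_inter, ← smul_eq_mul, ← sum_const, ← smul_eq_mul,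
      ← sum_const, ← sum_add_distrib]
    exact sum_le_sum fun v hv =>
      (G.minDegree_le_degree v).trans (G.degree_le_card_sub_one_add S hv)
  have hpos := hS.card_pos
  by_contra! hle
  obtain ⟨k, hk⟩ : ∃ k, #S = k + 1 := ⟨#S - 1, by omega⟩
  rw [hk, Nat.add_sub_cancel] at hsum
  rw [hk] at hle
  nlinarith

end SimpleGraph

theorem lapEig_one_mul_card_mul_card_le {n : ℕ} (hn : 1 < n) (G : SimpleGraph (Fin n))
    [DecidableRel G.Adj] (S : Finset (Fin n)) :
    lapEig G ⟨1, hn⟩ * (#S * #Sᶜ) ≤ n * #(G.interedges S Sᶜ) := by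
  have hn₀ : (0 : ℝ) < n := Nat.cast_pos.mpr (by omega)
  have hcard : (#S : ℝ) + #Sᶜ = n := by
    exact_mod_cast (card_add_card_compl S).trans (Fintype.card_fin n)
  -- Rayleigh's bound for `1_S - #S / n`, which is orthogonal to the constant vector
  set x : Fin n → ℝ := (fun i => if i ∈ S then 1 else 0) - fun _ => (#S : ℝ) / n
  have hx_sum : ∑ i, x i = 0 := by
    simp [x, sum_sub_distrib, mul_div_cancel₀ _ hn₀.ne']
  have hx_sq : x ⬝ᵥ x = #S * #Sᶜ / n := by
    have hterm : ∀ i, x i * x i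
        = (if i ∈ S then 1 else 0) * (1 - 2 * (#S / n)) + ((#S : ℝ) / n) ^ 2 := fun i => by
      by_cases hi : i ∈ S <;> simp only [x, Pi.sub_apply, hi, ↓reduceIte] <;> ring
    simp only [dotProduct, hterm, ite_mul, one_mul, zero_mul, sum_add_distrib, sum_ite_mem,
      univ_inter, sum_const, nsmul_eq_mul, card_univ, Fintype.card_fin]
    field_simp
    linear_combination -(#S : ℝ) * hcard
  have h := lapEig_one_mul_dotProduct_self_le hn G hx_sum
  rw [hx_sq, G.dotProduct_lapMatrix_mulVec_sub_const, G.dotProduct_lapMatrix_mulVec_indicator,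
    mul_div_assoc', div_le_iff₀ hn₀] at h
  linarith

theorem minDegree_le_card_interedges {n : ℕ} (hn : 1 < n) (G : SimpleGraph (Fin n))
    [DecidableRel G.Adj] (h1 : 2 ≤ lapEig G ⟨1, hn⟩) {S : Finset (Fin n)} (hS : S.Nonempty)
    (hSc : Sᶜ.Nonempty) : G.minDegree ≤ #(G.interedges S Sᶜ) := by
  by_contra! hlt
  have hS_large := G.minDegree_lt_card_of_card_interedges_lt S hS hlt
  have hSc_large := G.minDegree_lt_card_of_card_interedges_lt Sᶜ hSc
    (by rwa [G.card_interedges_compl_comm])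
  have hcard : #S + #Sᶜ = n := (card_add_card_compl S).trans (Fintype.card_fin n)
  have hfiedler : 2 * (#S * #Sᶜ) ≤ n * #(G.interedges S Sᶜ) := by
    have h := (mul_le_mul_of_nonneg_right h1 (by positivity)).trans
      (lapEig_one_mul_card_mul_card_le hn G S)
    exact_mod_cast h
  -- with `e = #(G.interedges S Sᶜ)`: `#S, #Sᶜ ≥ δ + 1 ≥ e + 2`, so `2 #S #Sᶜ ≥ (e + 2) n > n e`
  nlinarith [Nat.mul_le_mul_right #Sᶜ hS_large, Nat.mul_le_mul_left #S hSc_large]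

namespace SimpleGraph

variable {V : Type*} [Fintype V] [DecidableEq V] (G : SimpleGraph V)

theorem exists_card_eq_minDegree_not_preconnected [Nontrivial V] [DecidableRel G.Adj] :
    ∃ F : Finset (Sym2 V), #F = G.minDegree ∧ (F : Set (Sym2 V)) ⊆ G.edgeSet ∧
      ¬ (G.deleteEdges F).Preconnected := by
  obtain ⟨v, hv⟩ := G.exists_minimal_degree_vertex
  refine ⟨G.incidenceFinset v, by rw [card_incidenceFinset_eq_degree, hv],
    fun e he => ((G.mem_incidenceFinset v e).mp he).1, fun hpre => ?_⟩
  obtain ⟨u, hvu⟩ := hpre.exists_adj_of_nontrivial v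
  rw [deleteEdges_adj] at hvu
  exact hvu.2 ((G.mem_incidenceFinset v _).mpr ⟨hvu.1, Sym2.mem_mk_left v u⟩)

theorem exists_nonempty_forall_adj_mem_of_not_preconnected {F : Set (Sym2 V)}
    (h : ¬ (G.deleteEdges F).Preconnected) :
    ∃ S : Finset V, S.Nonempty ∧ Sᶜ.Nonempty ∧
      ∀ v w, G.Adj v w → v ∈ S → w ∉ S → s(v, w) ∈ F := by
  classical
  obtain ⟨u, w, huw⟩ : ∃ u w, ¬ (G.deleteEdges F).Reachable u w := by
    simpa [Preconnected] using h
  refine ⟨({z | (G.deleteEdges F).Reachable u z} : Finset V), ⟨u, by simp⟩,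
    ⟨w, by simpa using huw⟩, fun a b hab ha hb => ?_⟩
  by_contra hF
  simp only [mem_filter, mem_univ, true_and] at ha hb
  exact hb (ha.trans (deleteEdges_adj.mpr ⟨hab, hF⟩).reachable)

end SimpleGraph

theorem edge_connectivity_eq_minDegree {n : ℕ} (hn : 1 < n) (G : SimpleGraph (Fin n))
    [DecidableRel G.Adj]
    (h1 : 2 ≤ lapEig G ⟨1, hn⟩) :
    edgeConnectivity G = G.minDegree := by
  have : Nontrivial (Fin n) := Fin.nontrivial_iff_two_le.mpr hn
  obtain ⟨F₀, hF₀⟩ := G.exists_card_eq_minDegree_not_preconnected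
  refine le_antisymm (Nat.sInf_le ⟨F₀, hF₀⟩) (le_csInf ⟨_, F₀, hF₀⟩ ?_)
  rintro _ ⟨F, rfl, -, hF⟩
  obtain ⟨S, hS, hSc, hcut⟩ := G.exists_nonempty_forall_adj_mem_of_not_preconnected hF
  exact (minDegree_le_card_interedges hn G h1 hS hSc).trans
    (G.card_interedges_le_card_of_forall_mem S hcut)
end
end

section
/- Let G = K_{s,s,…,s} be the complete r-partite graph with r parts each of size s (r ≥ 2, s ≥ 1). Then χ(G) = r, δ(G) = (r−1)s, the largest Laplacian eigenvalue is σ_{n−1} = rs, and equality χ(G) = σ_{n−1}/(σ_{n−1} − δ) holds. -/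
open Finset

noncomputable section

/-- The complete `r`-partite graph with parts of size `s`: vertices `i, j` are adjacent
iff they lie in different blocks of size `s`. -/
def completeMultipartite (r s : ℕ) : SimpleGraph (Fin (r * s)) where
  Adj a b := (a : ℕ) / s ≠ (b : ℕ) / s
  symm := ⟨fun _ _ h => h.symm⟩
  loopless := ⟨fun _ h => h rfl⟩

instance (r s : ℕ) : DecidableRel (completeMultipartite r s).Adj :=
  fun a b => inferInstanceAs (Decidable ((a : ℕ) / s ≠ (b : ℕ) / s))

/-!
Vertex `a` of `K_{s,…,s}` lies in block `a / s`, so the graph is the pullback of the complete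
graph `K_r` along this `s`-to-one map; hence `χ = r`, and every vertex is adjacent to everything
outside its own block, so the graph is `(r - 1) s`-regular. For the spectrum, the Laplacian of
any graph on `n` vertices is dominated by that of `K_n`, which is `n I - J`, so all Laplacian
eigenvalues are at most `n`; and a vector that is constant on blocks, with block values summing
to zero, is an eigenvector of eigenvalue `(r - 1) s + s = rs = n`.
-/

open SimpleGraph Matrix

theorem Fin.divNat_surjective {m n : ℕ} (hn : 0 < n) :
    Function.Surjective (Fin.divNat : Fin (m * n) → Fin m) :=
  fun k => ⟨Fin.mkDivMod k ⟨0, hn⟩, Fin.divNat_mkDivMod _ _⟩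

theorem Fin.sum_comp_divNat {M : Type*} [AddCommMonoid M] {m n : ℕ} (g : Fin m → M) :
    ∑ a : Fin (m * n), g a.divNat = n • ∑ k, g k := by
  have hdiv (p : Fin m × Fin n) : (finProdFinEquiv p).divNat = p.1 :=
    congrArg Prod.fst (finProdFinEquiv.symm_apply_apply p)
  rw [← finProdFinEquiv.sum_comp, Fintype.sum_prod_type, Finset.smul_sum]
  simp [hdiv]

theorem exists_ne_zero_sum_eq_zero {ι : Type*} [Fintype ι] [Nontrivial ι] :
    ∃ y : ι → ℝ, y ≠ 0 ∧ ∑ k, y k = 0 := by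
  classical
  obtain ⟨i, j, hij⟩ := exists_pair_ne ι
  refine ⟨Pi.single i 1 - Pi.single j 1, fun h => ?_, by simp⟩
  simpa [hij] using congrFun h i

theorem Tuple.comp_sort_apply_of_isTop {α : Type*} [LinearOrder α] {n : ℕ} {f : Fin n → α}
    {j : Fin n} (hj : IsTop j) {c : α} (hc : c ∈ Set.range f) (hle : ∀ i, f i ≤ c) :
    (f ∘ Tuple.sort f) j = c := by
  obtain ⟨i, rfl⟩ := hc
  refine le_antisymm (hle _) ?_
  simpa using Tuple.monotone_sort f (hj ((Tuple.sort f).symm i))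

theorem SimpleGraph.chromaticNumber_comap_top {V W : Type*} [Fintype W] {f : V → W}
    (hf : Function.Surjective f) :
    ((⊤ : SimpleGraph W).comap f).chromaticNumber = Fintype.card W := by
  refine le_antisymm ?_ ?_
  · exact (Coloring.mk f fun h => h).colorable.chromaticNumber_le
  · let g : (⊤ : SimpleGraph W) →g (⊤ : SimpleGraph W).comap f :=
      ⟨Function.surjInv hf, fun {a b} h => by simpa [Function.surjInv_eq hf] using h⟩
    simpa using chromaticNumber_mono_of_hom g

theorem SimpleGraph.dotProduct_lapMatrix_mulVec_le_card_mul {V : Type*} [Fintype V]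
    [DecidableEq V] (G : SimpleGraph V) [DecidableRel G.Adj] (x : V → ℝ) :
    x ⬝ᵥ (G.lapMatrix ℝ *ᵥ x) ≤ Fintype.card V * (x ⬝ᵥ x) := by
  have hquad := lapMatrix_toLinearMap₂' ℝ G x
  rw [toLinearMap₂'_apply'] at hquad
  have hsq : ∑ i, ∑ j, (x i - x j) ^ 2 =
      2 * (Fintype.card V * (x ⬝ᵥ x)) - 2 * (∑ i, x i) ^ 2 := by
    simp only [sub_sq, Finset.sum_add_distrib, Finset.sum_sub_distrib, Finset.sum_const,
      Finset.card_univ, nsmul_eq_mul, ← Finset.mul_sum, ← Finset.sum_mul, dotProduct, ← sq]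
    ring
  calc x ⬝ᵥ (G.lapMatrix ℝ *ᵥ x)
      = (∑ i, ∑ j, if G.Adj i j then (x i - x j) ^ 2 else 0) / 2 := hquad
    _ ≤ (∑ i, ∑ j, (x i - x j) ^ 2) / 2 := by
      gcongr with i _ j _
      split_ifs
      exacts [le_rfl, sq_nonneg _]
    _ = Fintype.card V * (x ⬝ᵥ x) - (∑ i, x i) ^ 2 := by rw [hsq]; ring
    _ ≤ Fintype.card V * (x ⬝ᵥ x) := sub_le_self _ (sq_nonneg _)

theorem Matrix.IsHermitian.eigenvalues_le_of_dotProduct_mulVec_le {n : Type*} [Fintype n]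
    [DecidableEq n] {A : Matrix n n ℝ} (hA : A.IsHermitian) {c : ℝ}
    (hc : ∀ x, x ⬝ᵥ (A *ᵥ x) ≤ c * (x ⬝ᵥ x)) (i : n) : hA.eigenvalues i ≤ c := by
  have hv : 0 < ⇑(hA.eigenvectorBasis i) ⬝ᵥ ⇑(hA.eigenvectorBasis i) := by
    refine lt_of_le_of_ne (Finset.sum_nonneg fun _ _ => mul_self_nonneg _) (Ne.symm ?_)
    rw [Ne, dotProduct_self_eq_zero]
    simpa using hA.eigenvectorBasis.orthonormal.ne_zero i
  have h := hc (hA.eigenvectorBasis i)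
  rw [hA.mulVec_eigenvectorBasis i, dotProduct_smul, smul_eq_mul] at h
  exact le_of_mul_le_mul_right h hv

theorem lapEig_eq_card_of_mulVec_eq_smul {n : ℕ} (G : SimpleGraph (Fin n)) [DecidableRel G.Adj]
    {j : Fin n} (hj : IsTop j) {v : Fin n → ℝ} (hv : v ≠ 0)
    (hLv : G.lapMatrix ℝ *ᵥ v = (n : ℝ) • v) : lapEig G j = n := by
  have hL := (posSemidef_lapMatrix ℝ G).1
  show (hL.eigenvalues ∘ Tuple.sort hL.eigenvalues) j = n
  refine Tuple.comp_sort_apply_of_isTop hj ?_ fun i => ?_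
  · rw [← hL.spectrum_real_eq_range_eigenvalues, ← Matrix.spectrum_toLin']
    exact Module.End.HasEigenvalue.mem_spectrum <| Module.End.hasEigenvalue_of_hasEigenvector
      ⟨Module.End.mem_eigenspace_iff.2 (by rwa [toLin'_apply]), hv⟩
  · simpa using
      hL.eigenvalues_le_of_dotProduct_mulVec_le (dotProduct_lapMatrix_mulVec_le_card_mul G) i

theorem completeMultipartite_adj {r s : ℕ} {a b : Fin (r * s)} :
    (completeMultipartite r s).Adj a b ↔ a.divNat ≠ b.divNat :=
  Fin.val_ne_iff (a := a.divNat) (b := b.divNat)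

theorem completeMultipartite_eq_comap (r s : ℕ) :
    completeMultipartite r s = (⊤ : SimpleGraph (Fin r)).comap Fin.divNat := by
  ext a b
  exact completeMultipartite_adj

theorem completeMultipartite_isRegularOfDegree (r s : ℕ) :
    (completeMultipartite r s).IsRegularOfDegree ((r - 1) * s) := by
  intro a
  have h := degree_eq_sum_if_adj (R := ℕ) (completeMultipartite r s) a
  rw [Nat.cast_id] at h
  rw [h]
  simp_rw [completeMultipartite_adj]
  rw [Fin.sum_comp_divNat (fun k => if a.divNat ≠ k then 1 else 0), Finset.sum_boole,
    Finset.filter_ne, Finset.card_erase_of_mem (Finset.mem_univ _), Finset.card_univ,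
    Fintype.card_fin, smul_eq_mul, Nat.cast_id, mul_comm]

theorem completeMultipartite_lapMatrix_mulVec_comp_divNat {r s : ℕ} {y : Fin r → ℝ}
    (hy : ∑ k, y k = 0) :
    (completeMultipartite r s).lapMatrix ℝ *ᵥ (y ∘ Fin.divNat) =
      ((r * s : ℕ) : ℝ) • (y ∘ Fin.divNat) := by
  ext a
  have hnbr : ∑ b ∈ (completeMultipartite r s).neighborFinset a, y b.divNat =
      -(s * y a.divNat) := by
    rw [neighborFinset_eq_filter, Finset.sum_filter]
    simp_rw [completeMultipartite_adj]
    rw [Fin.sum_comp_divNat (fun k => if a.divNat ≠ k then y k else 0), ← Finset.sum_filter,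
      Finset.filter_ne, Finset.sum_erase_eq_sub (Finset.mem_univ _), hy, nsmul_eq_mul]
    ring
  simp only [lapMatrix_mulVec_apply, Function.comp_apply, Pi.smul_apply, smul_eq_mul]
  rw [hnbr, completeMultipartite_isRegularOfDegree r s a]
  push_cast [Nat.cast_sub a.divNat.pos]
  ring

theorem completeMultipartite_chromatic_equality {r s : ℕ} (hr : 2 ≤ r) (hs : 1 ≤ s) :
    (completeMultipartite r s).chromaticNumber = r ∧
    (completeMultipartite r s).minDegree = (r - 1) * s ∧
    lapEig (completeMultipartite r s)
        ⟨r * s - 1, Nat.sub_lt (Nat.mul_pos (by omega) (by omega)) one_pos⟩ = (r : ℝ) * s ∧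
    (r : ℝ) = ((r : ℝ) * s) / ((r : ℝ) * s - ((r : ℝ) - 1) * s) := by
  have hblocks := Fin.divNat_surjective (m := r) hs
  refine ⟨?_, ?_, ?_, ?_⟩
  · rw [completeMultipartite_eq_comap, chromaticNumber_comap_top hblocks, Fintype.card_fin]
  · have : Nonempty (Fin (r * s)) := Fin.pos_iff_nonempty.1 (Nat.mul_pos (by omega) hs)
    exact (completeMultipartite_isRegularOfDegree r s).minDegree_eq
  · have : Nontrivial (Fin r) := Fin.nontrivial_iff_two_le.2 hr
    obtain ⟨y, hy0, hy⟩ := exists_ne_zero_sum_eq_zero (ι := Fin r)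
    have hv : y ∘ Fin.divNat ≠ 0 := fun h => hy0 (hblocks.injective_comp_right h)
    exact_mod_cast lapEig_eq_card_of_mulVec_eq_smul _ (fun i => Nat.le_sub_one_of_lt i.2) hv
      (completeMultipartite_lapMatrix_mulVec_comp_divNat hy)
  · rw [show (r : ℝ) * s - ((r : ℝ) - 1) * s = s by ring,
      mul_div_cancel_right₀ _ (Nat.cast_ne_zero.2 (by omega))]
end
end

section
/- Let G be a graph on n vertices with algebraic connectivity σ_1 (second smallest Laplacian eigenvalue). If 0 < σ_1 ≤ 1/2, then the vertex forwarding index satisfies ξ(G) ≥ √((1 − 2σ_1)/σ_1). -/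
open Finset

noncomputable section

/-- A routing: a choice of a path between every ordered pair of distinct vertices. -/
def Routing {V : Type*} (G : SimpleGraph V) : Type _ :=
  ∀ u v : V, u ≠ v → G.Path u v

/- The number of paths of the routing `R` having `w` as an internal vertex. -/
open scoped Classical in
def vertexLoad {n : ℕ} {G : SimpleGraph (Fin n)} (R : Routing G) (w : Fin n) : ℕ :=
  (Finset.univ.filter (fun p : Fin n × Fin n =>
    ∃ h : p.1 ≠ p.2, w ∈ (R p.1 p.2 h).val.support ∧ w ≠ p.1 ∧ w ≠ p.2)).card

/-- The vertex forwarding index `ξ(G) = min_R max_w ξ(G,R,w)`. -/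
def vertexForwarding {n : ℕ} (G : SimpleGraph (Fin n)) : ℕ :=
  sInf {m | ∃ R : Routing G, ∀ w : Fin n, vertexLoad R w ≤ m}

/- The number of paths of the routing `R` passing through the edge `e`. -/
open scoped Classical in
def edgeLoad {n : ℕ} {G : SimpleGraph (Fin n)} (R : Routing G) (e : Sym2 (Fin n)) : ℕ :=
  (Finset.univ.filter (fun p : Fin n × Fin n =>
    ∃ h : p.1 ≠ p.2, e ∈ (R p.1 p.2 h).val.edges)).card

/-- The edge forwarding index `π(G) = min_R max_e π(G,R,e)`. -/
def edgeForwarding {n : ℕ} (G : SimpleGraph (Fin n)) : ℕ :=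
  sInf {m | ∃ R : Routing G, ∀ e ∈ G.edgeSet, edgeLoad R e ≤ m}

/-! Take `f ⊥ 𝟙` in the span of eigenvectors for the two smallest Laplacian eigenvalues, so that
`f ⬝ᵥ L f ≤ σ₁ ‖f‖²`. Summing `(f u - f v)²` over all ordered pairs gives `2n‖f‖²`. Bounding each
term by Cauchy–Schwarz along the routing path from `u` to `v` (at most `n - 1` darts), and using
that a dart `d` lies on at most `ξ(d.fst) + ξ(d.snd) + 1 ≤ 2ξ + 1` routing paths, yields
`n‖f‖² ≤ (n - 1)(2ξ + 1) f ⬝ᵥ L f`. Hence `1 ≤ (2ξ + 1) σ₁`, which implies `ξ² ≥ (1 - 2σ₁)/σ₁`.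
Since `σ₁ > 0` the graph is connected, so an optimal routing exists. -/

open Matrix

theorem Tuple.comp_sort_one_le_max {α : Type*} [LinearOrder α] {n : ℕ} (hn : 1 < n)
    (f : Fin n → α) {i j : Fin n} (hij : i ≠ j) :
    (f ∘ Tuple.sort f) ⟨1, hn⟩ ≤ max (f i) (f j) := by
  have hle : ∀ k, ((Tuple.sort f).symm k).val ≠ 0 → (f ∘ Tuple.sort f) ⟨1, hn⟩ ≤ f k :=
    fun k hk => by
      simpa using Tuple.monotone_sort f (Fin.le_def.2 (Nat.one_le_iff_ne_zero.2 hk) :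
        (⟨1, hn⟩ : Fin n) ≤ (Tuple.sort f).symm k)
  by_cases hi : ((Tuple.sort f).symm i).val = 0
  · have hj : ((Tuple.sort f).symm j).val ≠ 0 := fun hj =>
      hij ((Tuple.sort f).symm.injective (Fin.ext (hi.trans hj.symm)))
    exact (hle j hj).trans (le_max_right _ _)
  · exact (hle i hi).trans (le_max_left _ _)

namespace Matrix.IsHermitian

variable {ι : Type*} [Fintype ι] [DecidableEq ι] {A : Matrix ι ι ℝ} (hA : A.IsHermitian)

theorem finrank_ker_toLin'_eq_card_eigenvalues_eq_zero :
    Module.finrank ℝ (LinearMap.ker (toLin' A)) = Fintype.card {i // hA.eigenvalues i = 0} := by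
  have hsum := LinearMap.finrank_range_add_finrank_ker (toLin' A)
  have hrank : A.rank = Fintype.card {i // ¬hA.eigenvalues i = 0} := hA.rank_eq_card_non_zero_eigs
  rw [toLin'_apply', ← rank, hrank, Fintype.card_subtype_compl,
    Module.finrank_fintype_fun_eq_card] at hsum
  have := Fintype.card_subtype_le (fun i => hA.eigenvalues i = 0)
  rw [toLin'_apply']
  omega

theorem eigenvectorBasis_dotProduct (i j : ι) :
    ⇑(hA.eigenvectorBasis i) ⬝ᵥ ⇑(hA.eigenvectorBasis j) = if i = j then 1 else 0 := by
  rw [dotProduct_comm, ← orthonormal_iff_ite.mp hA.eigenvectorBasis.orthonormal i j,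
    EuclideanSpace.inner_eq_star_dotProduct, star_trivial]

theorem exists_ne_zero_dotProduct_eq_zero_dotProduct_mulVec_le (c : ι → ℝ) {i j : ι}
    (hij : i ≠ j) (hle : hA.eigenvalues i ≤ hA.eigenvalues j) :
    ∃ f : ι → ℝ, f ≠ 0 ∧ c ⬝ᵥ f = 0 ∧ f ⬝ᵥ A *ᵥ f ≤ hA.eigenvalues j * (f ⬝ᵥ f) := by
  set u := ⇑(hA.eigenvectorBasis i)
  set w := ⇑(hA.eigenvectorBasis j)
  have huu : u ⬝ᵥ u = 1 := by simpa using hA.eigenvectorBasis_dotProduct i i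
  have hww : w ⬝ᵥ w = 1 := by simpa using hA.eigenvectorBasis_dotProduct j j
  have huw : u ⬝ᵥ w = 0 := by simpa [hij] using hA.eigenvectorBasis_dotProduct i j
  have hwu : w ⬝ᵥ u = 0 := by rwa [dotProduct_comm]
  have hAu : A *ᵥ u = hA.eigenvalues i • u := hA.mulVec_eigenvectorBasis i
  have hAw : A *ᵥ w = hA.eigenvalues j • w := hA.mulVec_eigenvectorBasis j
  clear_value u w
  have hnorm : ∀ a b : ℝ, (a • u + b • w) ⬝ᵥ (a • u + b • w) = a ^ 2 + b ^ 2 := fun a b => by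
    simp only [dotProduct_add, add_dotProduct, dotProduct_smul, smul_dotProduct, huu, hww, huw,
      hwu, smul_eq_mul]
    ring
  have hquad : ∀ a b : ℝ, (a • u + b • w) ⬝ᵥ A *ᵥ (a • u + b • w)
      = a ^ 2 * hA.eigenvalues i + b ^ 2 * hA.eigenvalues j := fun a b => by
    simp only [mulVec_add, mulVec_smul, hAu, hAw, dotProduct_add, add_dotProduct, dotProduct_smul,
      smul_dotProduct, huu, hww, huw, hwu, smul_eq_mul]
    ring
  obtain ⟨a, b, hab, hc⟩ : ∃ a b : ℝ, a ^ 2 + b ^ 2 ≠ 0 ∧ c ⬝ᵥ (a • u + b • w) = 0 := by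
    by_cases hcu : c ⬝ᵥ u = 0
    · exact ⟨1, 0, by norm_num, by simp [hcu]⟩
    · refine ⟨c ⬝ᵥ w, -(c ⬝ᵥ u),
        (add_pos_of_nonneg_of_pos (sq_nonneg _) (sq_pos_iff.2 (neg_ne_zero.2 hcu))).ne', ?_⟩
      simp only [dotProduct_add, dotProduct_smul, smul_eq_mul]
      ring
  refine ⟨a • u + b • w, fun h => hab ?_, hc, ?_⟩
  · rw [← hnorm, h, zero_dotProduct]
  · rw [hquad, hnorm]
    nlinarith [sq_nonneg a]

end Matrix.IsHermitian

namespace SimpleGraph.Walk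

variable {V : Type*} {G : SimpleGraph V}

theorem sum_map_darts_sub {M : Type*} [AddCommGroup M] (f : V → M) {u v : V} (p : G.Walk u v) :
    (p.darts.map fun d => f d.fst - f d.snd).sum = f u - f v := by
  induction p with
  | nil => simp
  | cons h q ih => rw [darts_cons, List.map_cons, List.sum_cons, ih]; abel

theorem IsPath.snd_ne_start_of_mem_darts {u v : V} {p : G.Walk u v} (hp : p.IsPath)
    {d : G.Dart} (hd : d ∈ p.darts) : d.snd ≠ u := by
  have hnd := hp.support_nodup
  rw [← cons_map_snd_darts, List.nodup_cons] at hnd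
  exact fun h => hnd.1 (List.mem_map.mpr ⟨d, hd, h⟩)

theorem IsPath.fst_ne_end_of_mem_darts {u v : V} {p : G.Walk u v} (hp : p.IsPath)
    {d : G.Dart} (hd : d ∈ p.darts) : d.fst ≠ v := by
  have hnd := hp.support_nodup
  rw [← map_fst_darts_append, List.nodup_append] at hnd
  exact hnd.2.2 _ (List.mem_map_of_mem hd) _ (List.mem_singleton_self v)

theorem IsPath.sq_sub_le_length_mul [DecidableEq V] {u v : V} {p : G.Walk u v} (hp : p.IsPath)
    (f : V → ℝ) :
    (f u - f v) ^ 2 ≤ p.length * ∑ d ∈ p.darts.toFinset, (f d.fst - f d.snd) ^ 2 := by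
  have hnd : p.darts.Nodup := darts_nodup_of_support_nodup hp.support_nodup
  calc (f u - f v) ^ 2 = (∑ d ∈ p.darts.toFinset, (f d.fst - f d.snd)) ^ 2 := by
        rw [List.sum_toFinset _ hnd, sum_map_darts_sub]
    _ ≤ #p.darts.toFinset * ∑ d ∈ p.darts.toFinset, (f d.fst - f d.snd) ^ 2 :=
        sq_sum_le_card_mul_sum_sq
    _ = p.length * ∑ d ∈ p.darts.toFinset, (f d.fst - f d.snd) ^ 2 := by
        rw [List.toFinset_card_of_nodup hnd, length_darts]

end SimpleGraph.Walk

theorem Fintype.sum_sum_sq_sub {ι : Type*} [Fintype ι] (f : ι → ℝ) :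
    ∑ i, ∑ j, (f i - f j) ^ 2 = 2 * (Fintype.card ι * ∑ i, f i ^ 2 - (∑ i, f i) ^ 2) := by
  simp only [sub_sq, sum_add_distrib, sum_sub_distrib, sum_const, card_univ, nsmul_eq_mul,
    ← mul_sum, ← sum_mul]
  ring

theorem SimpleGraph.sum_darts_sq_sub {V : Type*} [Fintype V] [DecidableEq V] (G : SimpleGraph V)
    [DecidableRel G.Adj] (f : V → ℝ) :
    ∑ d : G.Dart, (f d.fst - f d.snd) ^ 2 = 2 * (f ⬝ᵥ G.lapMatrix ℝ *ᵥ f) := by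
  have h := G.lapMatrix_toLinearMap₂' ℝ f
  rw [toLinearMap₂'_apply'] at h
  rw [h, mul_div_cancel₀ _ two_ne_zero, ← Fintype.sum_prod_type', ← sum_filter]
  exact sum_bij' (fun d _ => d.toProd) (fun p hp => ⟨p, (mem_filter.1 hp).2⟩)
    (fun d _ => by simp [d.adj]) (fun _ _ => mem_univ _) (fun _ _ => rfl) (fun _ _ => rfl)
    (fun _ _ => rfl)

theorem SimpleGraph.card_connectedComponent_eq_card_eigenvalues_lapMatrix_eq_zero {V : Type*}
    [Fintype V] [DecidableEq V] (G : SimpleGraph V) [DecidableRel G.Adj] :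
    Fintype.card G.ConnectedComponent
      = Fintype.card {i // (G.isHermitian_lapMatrix ℝ).eigenvalues i = 0} := by
  rw [card_connectedComponent_eq_finrank_ker_toLin'_lapMatrix,
    Matrix.IsHermitian.finrank_ker_toLin'_eq_card_eigenvalues_eq_zero]

section Routing

variable {n : ℕ} {G : SimpleGraph (Fin n)}

open scoped Classical in
def dartLoad (R : Routing G) (d : G.Dart) : ℕ :=
  #{p : Fin n × Fin n | ∃ h : p.1 ≠ p.2, d ∈ (R p.1 p.2 h).val.darts}

open scoped Classical in
/-- A routing path through `d` has `d.fst` as an internal vertex unless it starts there, and then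
`d.snd` is internal unless the path is `d` itself. -/
theorem dartLoad_le_vertexLoad (R : Routing G) (d : G.Dart) :
    dartLoad R d ≤ vertexLoad R d.fst + vertexLoad R d.snd + 1 := by
  set Sfst := ({p : Fin n × Fin n | ∃ h : p.1 ≠ p.2,
    d.fst ∈ (R p.1 p.2 h).val.support ∧ d.fst ≠ p.1 ∧ d.fst ≠ p.2} : Finset _)
  set Ssnd := ({p : Fin n × Fin n | ∃ h : p.1 ≠ p.2,
    d.snd ∈ (R p.1 p.2 h).val.support ∧ d.snd ≠ p.1 ∧ d.snd ≠ p.2} : Finset _)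
  have hsub : ({p : Fin n × Fin n | ∃ h : p.1 ≠ p.2, d ∈ (R p.1 p.2 h).val.darts} : Finset _)
      ⊆ Sfst ∪ Ssnd ∪ {d.toProd} := by
    intro p hp
    obtain ⟨h, hd⟩ := (mem_filter.1 hp).2
    have hpath := (R p.1 p.2 h).2
    by_cases hfst : d.fst = p.1
    · by_cases hsnd : d.snd = p.2
      · simp [Prod.ext_iff, hfst, hsnd]
      · refine mem_union_left _ (mem_union_right _ (mem_filter.2 ⟨mem_univ _, h, ?_, ?_, hsnd⟩))
        · exact (R p.1 p.2 h).val.dart_snd_mem_support_of_mem_darts hd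
        · exact hpath.snd_ne_start_of_mem_darts hd
    · refine mem_union_left _ (mem_union_left _ (mem_filter.2 ⟨mem_univ _, h, ?_, hfst, ?_⟩))
      · exact (R p.1 p.2 h).val.dart_fst_mem_support_of_mem_darts hd
      · exact hpath.fst_ne_end_of_mem_darts hd
  calc dartLoad R d ≤ #(Sfst ∪ Ssnd ∪ {d.toProd}) := card_le_card hsub
    _ ≤ #Sfst + #Ssnd + 1 := (card_union_le _ _).trans (by grw [card_union_le, card_singleton])

theorem sum_sum_sq_sub_le_dartLoad [DecidableRel G.Adj] (R : Routing G) (f : Fin n → ℝ) :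
    ∑ u, ∑ v, (f u - f v) ^ 2
      ≤ (n - 1 : ℝ) * ∑ d : G.Dart, dartLoad R d * (f d.fst - f d.snd) ^ 2 := by
  classical
  have hpair : ∀ p : Fin n × Fin n, (f p.1 - f p.2) ^ 2 ≤ (n - 1 : ℝ) * ∑ d : G.Dart,
      if ∃ h : p.1 ≠ p.2, d ∈ (R p.1 p.2 h).val.darts then (f d.fst - f d.snd) ^ 2 else 0 := by
    rintro ⟨u, v⟩
    by_cases huv : u = v
    · simp [huv]
    have hlen : ((R u v huv).val.length : ℝ) ≤ n - 1 := by
      have := (R u v huv).2.length_lt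
      rw [Fintype.card_fin] at this
      rw [le_sub_iff_add_le]; exact_mod_cast this
    set P := (R u v huv).val
    calc (f u - f v) ^ 2 ≤ P.length * ∑ d ∈ P.darts.toFinset, (f d.fst - f d.snd) ^ 2 :=
          (R u v huv).2.sq_sub_le_length_mul f
      _ ≤ (n - 1 : ℝ) * ∑ d ∈ P.darts.toFinset, (f d.fst - f d.snd) ^ 2 := by gcongr
      _ = _ := by
          rw [← sum_filter]
          congr 2
          ext d
          simp [P, huv]
  calc ∑ u, ∑ v, (f u - f v) ^ 2 = ∑ p : Fin n × Fin n, (f p.1 - f p.2) ^ 2 :=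
        (Fintype.sum_prod_type' _).symm
    _ ≤ _ := sum_le_sum fun p _ => hpair p
    _ = _ := by
        rw [← mul_sum, sum_comm]
        congr 1
        refine sum_congr rfl fun d _ => ?_
        rw [← sum_filter, sum_const, nsmul_eq_mul]
        rfl

theorem card_mul_dotProduct_self_le_of_vertexLoad_le [DecidableRel G.Adj] (R : Routing G) {x : ℕ}
    (hx : ∀ w, vertexLoad R w ≤ x) (f : Fin n → ℝ) (hf : ∑ v, f v = 0) :
    n * (f ⬝ᵥ f) ≤ (n - 1) * (2 * x + 1) * (f ⬝ᵥ G.lapMatrix ℝ *ᵥ f) := by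
  obtain rfl | hn := n.eq_zero_or_pos
  · simp
  have hdart : ∀ d : G.Dart, (dartLoad R d : ℝ) ≤ 2 * x + 1 := fun d => by
    have := dartLoad_le_vertexLoad R d
    have := hx d.fst
    have := hx d.snd
    exact_mod_cast (by omega : dartLoad R d ≤ 2 * x + 1)
  suffices 2 * (n * (f ⬝ᵥ f)) ≤ 2 * ((n - 1) * (2 * x + 1) * (f ⬝ᵥ G.lapMatrix ℝ *ᵥ f)) by
    linarith
  calc 2 * (n * (f ⬝ᵥ f)) = ∑ u, ∑ v, (f u - f v) ^ 2 := by
        rw [Fintype.sum_sum_sq_sub, hf, Fintype.card_fin]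
        simp [dotProduct, sq]
    _ ≤ (n - 1 : ℝ) * ∑ d : G.Dart, dartLoad R d * (f d.fst - f d.snd) ^ 2 :=
        sum_sum_sq_sub_le_dartLoad R f
    _ ≤ (n - 1 : ℝ) * ∑ d : G.Dart, (2 * x + 1) * (f d.fst - f d.snd) ^ 2 := by
        have : (1 : ℝ) ≤ n := by exact_mod_cast hn
        gcongr with d
        exact hdart d
    _ = 2 * ((n - 1) * (2 * x + 1) * (f ⬝ᵥ G.lapMatrix ℝ *ᵥ f)) := by
        rw [← mul_sum, G.sum_darts_sq_sub]; ring

theorem SimpleGraph.Preconnected.exists_routing_vertexLoad_le_vertexForwarding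
    (hG : G.Preconnected) : ∃ R : Routing G, ∀ w, vertexLoad R w ≤ vertexForwarding G :=
  Nat.sInf_mem (s := {m | ∃ R : Routing G, ∀ w, vertexLoad R w ≤ m})
    ⟨n * n, fun u v _ => (hG u v).some.toPath, fun _ => (card_filter_le _ _).trans (by simp)⟩

variable (G) [DecidableRel G.Adj]

theorem preconnected_of_lapEig_pos (hn : 1 < n) (h0 : 0 < lapEig G ⟨1, hn⟩) :
    G.Preconnected := by
  classical
  by_contra hG
  obtain ⟨u, v, huv⟩ : ∃ u v, ¬G.Reachable u v := by simpa [SimpleGraph.Preconnected] using hG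
  have hcard : 1 < Fintype.card G.ConnectedComponent := Fintype.one_lt_card_iff.2
    ⟨G.connectedComponentMk u, G.connectedComponentMk v,
      fun h => huv (SimpleGraph.ConnectedComponent.eq.1 h)⟩
  rw [G.card_connectedComponent_eq_card_eigenvalues_lapMatrix_eq_zero] at hcard
  obtain ⟨⟨i, hi⟩, ⟨j, hj⟩, hij⟩ := Fintype.one_lt_card_iff.1 hcard
  have hle := Tuple.comp_sort_one_le_max hn (G.isHermitian_lapMatrix ℝ).eigenvalues
    (Subtype.coe_ne_coe.2 hij)
  rw [hi, hj, max_self] at hle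
  exact (h0.trans_le hle).false

theorem exists_sum_eq_zero_dotProduct_lapMatrix_le (hn : 1 < n) :
    ∃ f : Fin n → ℝ, f ≠ 0 ∧ ∑ v, f v = 0 ∧
      f ⬝ᵥ G.lapMatrix ℝ *ᵥ f ≤ lapEig G ⟨1, hn⟩ * (f ⬝ᵥ f) := by
  set hL := (G.posSemidef_lapMatrix ℝ).1
  have h01 : (⟨0, by omega⟩ : Fin n) < ⟨1, hn⟩ := Fin.mk_lt_mk.2 zero_lt_one
  obtain ⟨f, hf, hsum, hquad⟩ := hL.exists_ne_zero_dotProduct_eq_zero_dotProduct_mulVec_le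
    (fun _ => 1) ((Tuple.sort hL.eigenvalues).injective.ne h01.ne)
    (Tuple.monotone_sort hL.eigenvalues h01.le)
  exact ⟨f, hf, by simpa [dotProduct] using hsum, hquad⟩

theorem one_le_two_mul_vertexForwarding_add_one_mul_lapEig (hn : 1 < n)
    (h0 : 0 < lapEig G ⟨1, hn⟩) : 1 ≤ (2 * vertexForwarding G + 1) * lapEig G ⟨1, hn⟩ := by
  obtain ⟨R, hR⟩ :=
    (preconnected_of_lapEig_pos G hn h0).exists_routing_vertexLoad_le_vertexForwarding
  obtain ⟨f, hf, hsum, hquad⟩ := exists_sum_eq_zero_dotProduct_lapMatrix_le G hn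
  have hff : 0 < f ⬝ᵥ f := by simpa using dotProduct_self_star_pos_iff.2 hf
  have hn' : (2 : ℝ) ≤ n := by exact_mod_cast hn
  set t := (2 * vertexForwarding G + 1 : ℝ) * lapEig G ⟨1, hn⟩
  have key : (n : ℝ) * (f ⬝ᵥ f) ≤ ((n - 1) * t) * (f ⬝ᵥ f) := calc
    _ ≤ (n - 1) * (2 * vertexForwarding G + 1) * (f ⬝ᵥ G.lapMatrix ℝ *ᵥ f) :=
        card_mul_dotProduct_self_le_of_vertexLoad_le R hR f hsum
    _ ≤ (n - 1) * (2 * vertexForwarding G + 1) * (lapEig G ⟨1, hn⟩ * (f ⬝ᵥ f)) := by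
        have : (0 : ℝ) ≤ n - 1 := by linarith
        gcongr
    _ = _ := by ring
  nlinarith [le_of_mul_le_mul_right key hff]

end Routing

theorem vertex_forwarding_lower_bound_general {n : ℕ} (hn : 1 < n) (G : SimpleGraph (Fin n))
    [DecidableRel G.Adj]
    (h0 : 0 < lapEig G ⟨1, hn⟩) :
    Real.sqrt ((1 - 2 * lapEig G ⟨1, hn⟩) / lapEig G ⟨1, hn⟩)
      ≤ (vertexForwarding G : ℝ) := by
  have h := one_le_two_mul_vertexForwarding_add_one_mul_lapEig G hn h0
  rw [Real.sqrt_le_left (Nat.cast_nonneg _), div_le_iff₀ h0]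
  nlinarith [mul_nonneg (sq_nonneg ((vertexForwarding G : ℝ) - 1)) h0.le]

theorem vertex_forwarding_lower_bound {n : ℕ} (hn : 1 < n) (G : SimpleGraph (Fin n))
    [DecidableRel G.Adj]
    (h0 : 0 < lapEig G ⟨1, hn⟩) (h1 : lapEig G ⟨1, hn⟩ ≤ 1 / 2) :
    Real.sqrt ((1 - 2 * lapEig G ⟨1, hn⟩) / lapEig G ⟨1, hn⟩)
      ≤ (vertexForwarding G : ℝ) :=
  vertex_forwarding_lower_bound_general hn G h0
end
end
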